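/- Let n₁, n₂ ≥ 1, let τ₁ and τ₂ be faithful probability Radon measures on [0,1], and set m = lcm(n₁, n₂). Then there exist a faithful diffuse probability Radon measure σ on [0,1] and injective unital *-homomorphisms φᵢ : A_{nᵢ} → A_m (i = 1, 2) such that ∫ tr(φᵢ(f)(t)) dσ(t) = ∫ tr(f(t)) dτᵢ(t) for all f ∈ A_{nᵢ}. -/

import Mathlib

open MeasureTheory
open scoped ENNReal

noncomputable section

/-- The unit interval `[0,1]` as a type. -/
abbrev 𝕀 : Type := unitInterval

/-- A measure on `[0,1]` is *faithful* if it assigns positive measure to every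
nonempty (relatively) open subset. -/
def Faithful (μ : Measure 𝕀) : Prop :=
  ∀ U : Set 𝕀, IsOpen U → U.Nonempty → 0 < μ U

/-- A measure on `[0,1]` is *diffuse* (atomless) if every singleton has measure zero. -/
def Diffuse (μ : Measure 𝕀) : Prop :=
  ∀ t : 𝕀, μ {t} = 0

open scoped Matrix.Norms.L2Operator ComplexOrder

/-- `n × n` complex matrices. -/
abbrev Mat (n : ℕ) : Type := Matrix (Fin n) (Fin n) ℂ

/-- The C*-algebra `𝔸 n = C([0,1], Mₙ(ℂ))` of continuous matrix-valued functions. -/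
abbrev 𝔸 (n : ℕ) : Type := C(𝕀, Mat n)

/-- The tracial state on `𝔸 n` induced by the measure `μ` on `[0,1]`:
`f ↦ ∫ tr(f t) dμ(t)`, where `tr` is the normalized trace on `Mₙ(ℂ)`. -/
def trInt (n : ℕ) (μ : Measure 𝕀) (f : 𝔸 n) : ℂ :=
  ∫ t, (f t).trace / (n : ℂ) ∂μ

/-! The Lebesgue measure on `[0,1]` serves as `σ` for both embeddings. For a faithful `τ` the
distribution function `F t = τ [0,t]` is strictly increasing, so the quantile function
`q u = inf {t | u ≤ F t}` is monotone and surjective, hence continuous; right continuity of `F`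
makes `q` and `F` a Galois connection, which says exactly that `q` pushes Lebesgue measure to `τ`.
For `m = n k`, the map `f ↦ (f ∘ q) ⊗ 1ₖ` is then an injective unital *-homomorphism
`A_n → A_m` carrying `∫ tr ∘ f dτ` to `∫ tr ∘ φ(f) dσ`. -/

open Set

section MeasureIic

variable {α : Type*} [CompleteLinearOrder α] [TopologicalSpace α] [OrderTopology α]
  [FirstCountableTopology α] [MeasurableSpace α] [OpensMeasurableSpace α]

lemma MeasureTheory.measure_Iic_sInf (μ : Measure α) [IsFiniteMeasure μ] {S : Set α}
    (hS : S.Nonempty) : μ (Iic (sInf S)) = ⨅ t ∈ S, μ (Iic t) := by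
  refine le_antisymm (le_iInf₂ fun t ht => measure_mono (Iic_subset_Iic.2 (sInf_le ht))) ?_
  obtain ⟨u, hu_anti, hu_lim, hu_mem⟩ := exists_seq_tendsto_sInf hS (OrderBot.bddBelow S)
  have hIic : Iic (sInf S) = ⋂ n, Iic (u n) := by
    ext t
    simp only [mem_Iic, mem_iInter]
    exact ⟨fun h n => h.trans (sInf_le (hu_mem n)), fun h => ge_of_tendsto' hu_lim h⟩
  rw [hIic, Antitone.measure_iInter (fun _ _ h => Iic_subset_Iic.2 (hu_anti h))
    (fun _ => measurableSet_Iic.nullMeasurableSet) ⟨0, measure_ne_top μ _⟩]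
  exact le_iInf fun n => iInf₂_le (u n) (hu_mem n)

end MeasureIic

namespace unitInterval

lemma faithful_volume : Faithful (volume : Measure 𝕀) := by
  intro U hU hne
  obtain ⟨a, b, hab, hsub⟩ := hU.exists_Ioo_subset hne
  refine lt_of_lt_of_le ?_ (measure_mono hsub)
  rw [volume_Ioo]
  exact ENNReal.ofReal_pos.2 (sub_pos.2 hab)

lemma diffuse_volume : Diffuse (volume : Measure 𝕀) :=
  measure_singleton

variable (τ : Measure 𝕀) [IsProbabilityMeasure τ]

def cdf (t : 𝕀) : 𝕀 := ⟨τ.real (Iic t), measureReal_nonneg, measureReal_le_one⟩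

def quantile (u : 𝕀) : 𝕀 := sInf {t | u ≤ cdf τ t}

lemma ofReal_cdf (t : 𝕀) : ENNReal.ofReal (cdf τ t) = τ (Iic t) :=
  ofReal_measureReal (measure_ne_top τ _)

lemma le_cdf_iff {u t : 𝕀} : u ≤ cdf τ t ↔ ENNReal.ofReal u ≤ τ (Iic t) := by
  rw [← ofReal_cdf, ENNReal.ofReal_le_ofReal_iff (cdf τ t).2.1]
  rfl

lemma monotone_cdf : Monotone (cdf τ) := fun _ _ h =>
  (le_cdf_iff τ).2 ((ofReal_cdf τ _).trans_le (measure_mono (Iic_subset_Iic.2 h)))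

lemma gc_quantile_cdf : GaloisConnection (quantile τ) (cdf τ) := by
  intro u t
  refine ⟨fun h => le_trans ?_ (monotone_cdf τ h), fun h => sInf_le h⟩
  have hne : {s | u ≤ cdf τ s}.Nonempty := ⟨⊤, (le_cdf_iff τ).2 <| by
    rw [Iic_top, measure_univ]
    exact ENNReal.ofReal_le_one.2 u.2.2⟩
  rw [le_cdf_iff, quantile, measure_Iic_sInf τ hne]
  exact le_iInf₂ fun s hs => (le_cdf_iff τ).1 hs

lemma monotone_quantile : Monotone (quantile τ) :=
  (gc_quantile_cdf τ).monotone_l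

lemma map_quantile_volume : (volume : Measure 𝕀).map (quantile τ) = τ := by
  have hmeas : Measurable (quantile τ) := (monotone_quantile τ).measurable
  refine Measure.ext_of_Iic _ _ fun a => ?_
  have hpre : quantile τ ⁻¹' Iic a = Iic (cdf τ a) := ext fun u => gc_quantile_cdf τ u a
  rw [Measure.map_apply hmeas measurableSet_Iic, hpre, volume_Iic, ofReal_cdf]

variable {τ}

lemma strictMono_cdf (hτ : Faithful τ) : StrictMono (cdf τ) := by
  intro s t hst
  have hpos : 0 < τ (Ioc s t) := (hτ _ isOpen_Ioo (nonempty_Ioo.2 hst)).trans_le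
    (measure_mono Ioo_subset_Ioc_self)
  have hlt : τ (Iic s) < τ (Iic t) := by
    rw [← Iic_union_Ioc_eq_Iic hst.le, measure_union (Iic_disjoint_Ioc le_rfl) measurableSet_Ioc]
    exact ENNReal.lt_add_right (measure_ne_top τ _) hpos.ne'
  rwa [← ofReal_cdf, ← ofReal_cdf, ENNReal.ofReal_lt_ofReal_iff_of_nonneg (cdf τ s).2.1] at hlt

lemma quantile_cdf (hτ : Faithful τ) (t : 𝕀) : quantile τ (cdf τ t) = t :=
  eq_of_forall_ge_iff fun s => (gc_quantile_cdf τ _ s).trans (strictMono_cdf hτ).le_iff_le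

lemma surjective_quantile (hτ : Faithful τ) : Function.Surjective (quantile τ) :=
  fun t => ⟨cdf τ t, quantile_cdf hτ t⟩

lemma continuous_quantile (hτ : Faithful τ) : Continuous (quantile τ) :=
  (monotone_quantile τ).continuous_of_surjective (surjective_quantile hτ)

end unitInterval

namespace Matrix

open scoped Kronecker

lemma trace_reindex {ι κ M : Type*} [Fintype ι] [Fintype κ] [AddCommMonoid M] (e : ι ≃ κ)
    (a : Matrix ι ι M) : (reindex e e a).trace = a.trace :=
  Fintype.sum_equiv e.symm _ _ fun _ => rfl

variable {R : Type*} [CommSemiring R] [StarRing R] {ι η κ : Type*} [Fintype ι] [DecidableEq ι]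
  [Fintype η] [DecidableEq η] [Fintype κ] [DecidableEq κ]

def ampliation (e : ι × η ≃ κ) : Matrix ι ι R →⋆ₐ[R] Matrix κ κ R where
  toAlgHom := (reindexAlgEquiv R R e).toAlgHom.comp
    ((kroneckerAlgEquiv ι η R).toAlgHom.comp Algebra.TensorProduct.includeLeft)
  map_star' a := by
    simp [star_eq_conjTranspose, conjTranspose_kronecker]

lemma ampliation_apply (e : ι × η ≃ κ) (a : Matrix ι ι R) :
    ampliation e a = reindex e e (a ⊗ₖ 1) := by
  show reindexAlgEquiv R R e (kroneckerAlgEquiv ι η R (a ⊗ₜ 1)) = _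
  simp

lemma continuous_ampliation [TopologicalSpace R] [IsTopologicalSemiring R] (e : ι × η ≃ κ) :
    Continuous (ampliation (R := R) e) := by
  rw [show ⇑(ampliation (R := R) e) = fun a => reindex e e (a ⊗ₖ 1) from
    funext (ampliation_apply e)]
  exact (continuous_pi fun p => continuous_pi fun q =>
    (continuous_apply_apply p.1 q.1).mul continuous_const).matrix_reindex e e

lemma ampliation_injective [Nonempty η] (e : ι × η ≃ κ) :
    Function.Injective (ampliation (R := R) e) := by
  intro a b h
  rw [ampliation_apply, ampliation_apply] at h
  have hk := congrFun₂ ((reindex e e).injective h)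
  obtain ⟨k⟩ := ‹Nonempty η›
  ext i j
  simpa using hk (i, k) (j, k)

lemma trace_ampliation (e : ι × η ≃ κ) (a : Matrix ι ι R) :
    (ampliation e a).trace = a.trace * Fintype.card η := by
  rw [ampliation_apply, trace_reindex, trace_kronecker, trace_one]

end Matrix

namespace ContinuousMap

variable {X Y 𝕜 A B : Type*} [TopologicalSpace X] [TopologicalSpace Y] [CommSemiring 𝕜]
  [TopologicalSpace A] [Semiring A] [IsTopologicalSemiring A] [Star A] [ContinuousStar A]
  [Algebra 𝕜 A]

lemma compStarAlgHom'_injective {q : C(X, Y)} (hq : Function.Surjective q) :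
    Function.Injective (compStarAlgHom' 𝕜 A q) := fun f g h => ext fun y => by
  obtain ⟨x, rfl⟩ := hq y
  exact DFunLike.congr_fun h x

variable [TopologicalSpace B] [Semiring B] [IsTopologicalSemiring B] [Star B] [ContinuousStar B]
  [Algebra 𝕜 B]

lemma compStarAlgHom_injective {φ : A →⋆ₐ[𝕜] B} (hφ : Continuous φ) (hφ' : Function.Injective φ) :
    Function.Injective (compStarAlgHom X φ hφ) := fun _ _ h =>
  ext fun x => hφ' (DFunLike.congr_fun h x)

end ContinuousMap

lemma trInt_comp (n : ℕ) (μ : Measure 𝕀) (q : C(𝕀, 𝕀)) (f : 𝔸 n) :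
    trInt n μ (f.comp q) = trInt n (μ.map q) f :=
  (integral_map q.continuous.aemeasurable
    (f.continuous.matrix_trace.div_const _).aestronglyMeasurable).symm

lemma trInt_ampliation {n k : ℕ} (hk : k ≠ 0) (μ : Measure 𝕀) (f : 𝔸 n) :
    trInt (n * k) μ
      (ContinuousMap.compStarAlgHom 𝕀 _ (Matrix.continuous_ampliation finProdFinEquiv) f) =
      trInt n μ f := by
  refine integral_congr_ae (ae_of_all _ fun t => ?_)
  simp only [ContinuousMap.compStarAlgHom_apply, ContinuousMap.comp_apply, ContinuousMap.coe_mk,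
    Matrix.trace_ampliation, Fintype.card_fin, Nat.cast_mul]
  exact mul_div_mul_right _ _ (Nat.cast_ne_zero.2 hk)

def ampliationComp (n k : ℕ) (q : C(𝕀, 𝕀)) : 𝔸 n →⋆ₐ[ℂ] 𝔸 (n * k) :=
  (ContinuousMap.compStarAlgHom 𝕀 _ (Matrix.continuous_ampliation finProdFinEquiv)).comp
    (ContinuousMap.compStarAlgHom' ℂ (Mat n) q)

lemma ampliationComp_injective {n k : ℕ} (hk : k ≠ 0) {q : C(𝕀, 𝕀)}
    (hq : Function.Surjective q) : Function.Injective (ampliationComp n k q) := by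
  have : Nonempty (Fin k) := ⟨⟨0, Nat.pos_of_ne_zero hk⟩⟩
  rw [ampliationComp, StarAlgHom.coe_comp]
  exact (ContinuousMap.compStarAlgHom_injective _ (Matrix.ampliation_injective _)).comp
    (ContinuousMap.compStarAlgHom'_injective hq)

lemma trInt_ampliationComp {n k : ℕ} (hk : k ≠ 0) (μ : Measure 𝕀) (q : C(𝕀, 𝕀)) (f : 𝔸 n) :
    trInt (n * k) μ (ampliationComp n k q f) = trInt n (μ.map q) f := by
  rw [ampliationComp, StarAlgHom.comp_apply, trInt_ampliation hk,
    ContinuousMap.compStarAlgHom'_apply, trInt_comp]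

lemma exists_injective_trInt_volume_eq {n m : ℕ} (hm : 0 < m) (hd : n ∣ m) (τ : Measure 𝕀)
    [IsProbabilityMeasure τ] (hτ : Faithful τ) :
    ∃ φ : 𝔸 n →⋆ₐ[ℂ] 𝔸 m, Function.Injective φ ∧ ∀ f, trInt m volume (φ f) = trInt n τ f := by
  obtain ⟨k, rfl⟩ := hd
  have hk : k ≠ 0 := right_ne_zero_of_mul hm.ne'
  let q : C(𝕀, 𝕀) := ⟨unitInterval.quantile τ, unitInterval.continuous_quantile hτ⟩
  refine ⟨ampliationComp n k q, ampliationComp_injective hk (unitInterval.surjective_quantile hτ),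
    fun f => ?_⟩
  rw [trInt_ampliationComp hk]
  exact congrArg (trInt n · f) (unitInterval.map_quantile_volume τ)

theorem statement4_general (n₁ n₂ : ℕ) (hn₁ : 1 ≤ n₁) (hn₂ : 1 ≤ n₂) (τ₁ τ₂ : Measure 𝕀)
    [IsProbabilityMeasure τ₁] [IsProbabilityMeasure τ₂]
    (hτ₁ : Faithful τ₁) (hτ₂ : Faithful τ₂) :
    ∃ σ : Measure 𝕀, IsProbabilityMeasure σ ∧ σ.Regular ∧ Faithful σ ∧ Diffuse σ ∧
      ∃ (φ₁ : 𝔸 n₁ →⋆ₐ[ℂ] 𝔸 (Nat.lcm n₁ n₂)) (φ₂ : 𝔸 n₂ →⋆ₐ[ℂ] 𝔸 (Nat.lcm n₁ n₂)),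
        Function.Injective φ₁ ∧ Function.Injective φ₂ ∧
        (∀ f : 𝔸 n₁, trInt (Nat.lcm n₁ n₂) σ (φ₁ f) = trInt n₁ τ₁ f) ∧
        (∀ f : 𝔸 n₂, trInt (Nat.lcm n₁ n₂) σ (φ₂ f) = trInt n₂ τ₂ f) := by
  have hm : 0 < Nat.lcm n₁ n₂ := Nat.lcm_pos hn₁ hn₂
  obtain ⟨φ₁, hinj₁, htr₁⟩ := exists_injective_trInt_volume_eq hm (Nat.dvd_lcm_left _ _) τ₁ hτ₁
  obtain ⟨φ₂, hinj₂, htr₂⟩ := exists_injective_trInt_volume_eq hm (Nat.dvd_lcm_right _ _) τ₂ hτ₂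
  exact ⟨volume, inferInstance, inferInstance, unitInterval.faithful_volume,
    unitInterval.diffuse_volume, φ₁, φ₂, hinj₁, hinj₂, htr₁, htr₂⟩

/-- Joint embedding: given faithful measures τ₁, τ₂, both ⟨𝔸 n₁, τ₁⟩ and
⟨𝔸 n₂, τ₂⟩ embed into ⟨𝔸 m, σ⟩ for m = lcm(n₁,n₂) and some faithful diffuse measure σ. -/
theorem statement4 (n₁ n₂ : ℕ) (hn₁ : 1 ≤ n₁) (hn₂ : 1 ≤ n₂) (τ₁ τ₂ : Measure 𝕀)
    [IsProbabilityMeasure τ₁] [IsProbabilityMeasure τ₂] [τ₁.Regular] [τ₂.Regular]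
    (hτ₁ : Faithful τ₁) (hτ₂ : Faithful τ₂) :
    ∃ σ : Measure 𝕀, IsProbabilityMeasure σ ∧ σ.Regular ∧ Faithful σ ∧ Diffuse σ ∧
      ∃ (φ₁ : 𝔸 n₁ →⋆ₐ[ℂ] 𝔸 (Nat.lcm n₁ n₂)) (φ₂ : 𝔸 n₂ →⋆ₐ[ℂ] 𝔸 (Nat.lcm n₁ n₂)),
        Function.Injective φ₁ ∧ Function.Injective φ₂ ∧
        (∀ f : 𝔸 n₁, trInt (Nat.lcm n₁ n₂) σ (φ₁ f) = trInt n₁ τ₁ f) ∧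
        (∀ f : 𝔸 n₂, trInt (Nat.lcm n₁ n₂) σ (φ₂ f) = trInt n₂ τ₂ f) :=
  statement4_general n₁ n₂ hn₁ hn₂ τ₁ τ₂ hτ₁ hτ₂
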